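/- Let Y be a Banach space and {X_n}, X closed subspaces of Y. If X_n → X in the operator opening topology, then limsup_{n→∞} n(X_n) ≤ n(X). -/

import Mathlib

/-!
The numerical radius is tied to operator norms of perturbations of the identity:
`‖1 + t T‖ ≤ 1 + |t| v(T) + 2 t² ‖T‖²`, and conversely `t v(S) ≤ max ‖1 ± t S‖ - 1`.
Operator norms change at most by the factor `κ = ‖J‖ ‖J⁻¹‖` under conjugation by an isomorphism
`J : E ≃ F`, so transporting a norm-one `T` on `F` with small `v(T)` to `E` and renormalising gives
`n(E) ≤ (κ - 1) / t + κ² n(F) + 2 κ³ t` for every `t > 0`.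
If `r(Xₙ, X) → 0`, restricting to `Xₙ` operators `C` with `C(Xₙ) = X` and `‖C - I‖ → 0` gives such
isomorphisms with `κ → 1`; taking `κ = 1 + t²` and letting `t → 0` yields `limsup n(Xₙ) ≤ n(X)`.
-/

open Filter Metric ENNReal

noncomputable def nradius {E : Type*} [SeminormedAddCommGroup E] [NormedSpace ℝ E]
    (T : E →L[ℝ] E) : ℝ :=
  sSup {r : ℝ | ∃ (x : E) (f : E →L[ℝ] ℝ), ‖x‖ = 1 ∧ ‖f‖ = 1 ∧ f x = 1 ∧ r = |f (T x)|}

noncomputable def nindex (E : Type*) [SeminormedAddCommGroup E] [NormedSpace ℝ E] : ℝ :=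
  sInf {r : ℝ | ∃ T : E →L[ℝ] E, ‖T‖ = 1 ∧ r = nradius T}

open Classical in
noncomputable def r0 {Y : Type*} [NormedAddCommGroup Y] [NormedSpace ℝ Y]
    (A B : Submodule ℝ Y) : ℝ :=
  if ∃ C : Y ≃L[ℝ] Y, ⇑C '' (A : Set Y) = (B : Set Y) then
    sInf {r : ℝ | ∃ C : Y ≃L[ℝ] Y, ⇑C '' (A : Set Y) = (B : Set Y) ∧
      r = ‖(C : Y →L[ℝ] Y) - ContinuousLinearMap.id ℝ Y‖}
  else 1

noncomputable def rop {Y : Type*} [NormedAddCommGroup Y] [NormedSpace ℝ Y]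
    (A B : Submodule ℝ Y) : ℝ :=
  max (r0 A B) (r0 B A)

open Topology

section NumericalRadius

variable {E : Type*} [SeminormedAddCommGroup E] [NormedSpace ℝ E]

lemma abs_apply_apply_le (f : StrongDual ℝ E) (R : E →L[ℝ] E) (x : E) :
    |f (R x)| ≤ ‖f‖ * (‖R‖ * ‖x‖) :=
  (f.le_opNorm (R x)).trans (mul_le_mul_of_nonneg_left (R.le_opNorm x) (norm_nonneg f))

lemma abs_le_nradius (T : E →L[ℝ] E) {x : E} {f : StrongDual ℝ E}
    (hx : ‖x‖ = 1) (hf : ‖f‖ = 1) (hfx : f x = 1) : |f (T x)| ≤ nradius T := by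
  refine le_csSup ⟨‖T‖, ?_⟩ ⟨x, f, hx, hf, hfx, rfl⟩
  rintro r ⟨y, g, hy, hg, -, rfl⟩
  simpa [hy, hg] using abs_apply_apply_le g T y

lemma nradius_le {T : E →L[ℝ] E} {M : ℝ} (hM : 0 ≤ M)
    (h : ∀ (x : E) (f : StrongDual ℝ E), ‖x‖ = 1 → ‖f‖ = 1 → f x = 1 → |f (T x)| ≤ M) :
    nradius T ≤ M := by
  refine Real.sSup_le ?_ hM
  rintro r ⟨x, f, hx, hf, hfx, rfl⟩
  exact h x f hx hf hfx

lemma nradius_nonneg (T : E →L[ℝ] E) : 0 ≤ nradius T := by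
  refine Real.sSup_nonneg ?_
  rintro r ⟨x, f, -, -, -, rfl⟩
  exact abs_nonneg _

lemma nindex_nonneg : 0 ≤ nindex E := by
  refine Real.sInf_nonneg ?_
  rintro r ⟨T, -, rfl⟩
  exact nradius_nonneg T

lemma nindex_le_nradius {T : E →L[ℝ] E} (hT : ‖T‖ = 1) : nindex E ≤ nradius T :=
  csInf_le ⟨0, by rintro r ⟨T, -, rfl⟩; exact nradius_nonneg T⟩ ⟨T, hT, rfl⟩

lemma nindex_of_subsingleton [Subsingleton E] : nindex E = 0 := by
  have : {r : ℝ | ∃ T : E →L[ℝ] E, ‖T‖ = 1 ∧ r = nradius T} = ∅ := by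
    ext r
    simp [Subsingleton.elim _ (0 : E →L[ℝ] E)]
  rw [nindex, this, Real.sInf_empty]

lemma le_nindex {c : ℝ} {T₀ : E →L[ℝ] E} (hT₀ : ‖T₀‖ = 1)
    (h : ∀ T : E →L[ℝ] E, ‖T‖ = 1 → c ≤ nradius T) : c ≤ nindex E := by
  refine le_csInf ⟨_, T₀, hT₀, rfl⟩ ?_
  rintro r ⟨T, hT, rfl⟩
  exact h T hT

lemma norm_sub_inv_norm_smul_le {x : E} (hx : ‖x‖ = 1) (y : E) :
    ‖x - ‖y‖⁻¹ • y‖ ≤ 2 * ‖x - y‖ := by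
  have hy : ‖y - ‖y‖⁻¹ • y‖ ≤ ‖x - y‖ := by
    rcases eq_or_ne ‖y‖ 0 with h0 | h0
    · simp [h0]
    · have hpos : 0 < ‖y‖ := (norm_nonneg y).lt_of_ne' h0
      calc ‖y - ‖y‖⁻¹ • y‖ = ‖(1 - ‖y‖⁻¹) • y‖ := by rw [sub_smul, one_smul]
        _ = |(1 - ‖y‖⁻¹) * ‖y‖| := by rw [norm_smul, Real.norm_eq_abs, abs_mul, abs_of_pos hpos]
        _ = |‖x‖ - ‖y‖| := by rw [sub_mul, inv_mul_cancel₀ h0, one_mul, hx, abs_sub_comm]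
        _ ≤ ‖x - y‖ := abs_norm_sub_norm_le x y
  calc ‖x - ‖y‖⁻¹ • y‖ ≤ ‖x - y‖ + ‖y - ‖y‖⁻¹ • y‖ := norm_sub_le_norm_sub_add_norm_sub _ _ _
    _ ≤ 2 * ‖x - y‖ := by linarith

/-- The norming functional of `x + t • T x` is almost a supporting functional at the unit
vector `x`, so it sees `T` through the numerical radius up to an error `O(t)`. -/
lemma norm_one_add_smul_le (T : E →L[ℝ] E) (t : ℝ) :
    ‖1 + t • T‖ ≤ 1 + |t| * nradius T + 2 * t ^ 2 * ‖T‖ ^ 2 := by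
  have hv := nradius_nonneg T
  refine ContinuousLinearMap.opNorm_le_of_unit_norm (by positivity) fun x hx => ?_
  set y := x + t • T x with hy_def
  change ‖y‖ ≤ _
  rcases eq_or_ne ‖y‖ 0 with hy0 | hy0
  · rw [hy0]; positivity
  obtain ⟨f, hf, hfy⟩ := exists_dual_vector ℝ y hy0
  replace hfy : f y = ‖y‖ := by simpa using hfy
  set z := ‖y‖⁻¹ • y
  have hz : ‖z‖ = 1 := by rw [norm_smul, norm_inv, norm_norm, inv_mul_cancel₀ hy0]
  have hfz : f z = 1 := by rw [map_smul, hfy, smul_eq_mul, inv_mul_cancel₀ hy0]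
  have hxy : ‖x - y‖ ≤ |t| * ‖T‖ :=
    calc ‖x - y‖ = |t| * ‖T x‖ := by simp [hy_def, norm_smul]
      _ ≤ |t| * ‖T‖ := by simpa [hx] using mul_le_mul_of_nonneg_left (T.le_opNorm x) (abs_nonneg t)
  have hTx : |f (T x)| ≤ nradius T + 2 * |t| * ‖T‖ ^ 2 :=
    calc |f (T x)| ≤ |f (T z)| + |f (T (x - z))| := by
          rw [map_sub, map_sub]; linarith [abs_sub_abs_le_abs_sub (f (T x)) (f (T z))]
      _ ≤ nradius T + 1 * (‖T‖ * (2 * (|t| * ‖T‖))) := by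
          gcongr
          · exact abs_le_nradius T hz hf hfz
          · rw [← hf]
            refine (abs_apply_apply_le f T _).trans ?_
            gcongr
            exact (norm_sub_inv_norm_smul_le hx y).trans (by gcongr)
      _ = _ := by ring
  calc ‖y‖ = f x + t * f (T x) := by rw [← hfy, hy_def, map_add, map_smul, smul_eq_mul]
    _ ≤ 1 + |t| * |f (T x)| := by
        have hfx : f x ≤ 1 := (le_abs_self _).trans (by simpa [hf, hx] using f.le_opNorm x)
        linarith [le_abs_self (t * f (T x)), abs_mul t (f (T x))]
    _ ≤ 1 + |t| * (nradius T + 2 * |t| * ‖T‖ ^ 2) := by gcongr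
    _ = _ := by rw [mul_add, ← sq_abs t]; ring

lemma nradius_le_of_norm_one_add_smul_le {S : E →L[ℝ] E} {t M : ℝ} (ht : 0 < t) (hM : 1 ≤ M)
    (hpos : ‖1 + t • S‖ ≤ M) (hneg : ‖1 + (-t) • S‖ ≤ M) : nradius S ≤ (M - 1) / t := by
  refine nradius_le (div_nonneg (by linarith) ht.le) fun x f hx hf hfx => ?_
  have key : ∀ σ : ℝ, ‖1 + σ • S‖ ≤ M → 1 + σ * f (S x) ≤ M := fun σ hσ =>
    calc 1 + σ * f (S x) = f ((1 + σ • S) x) := by simp [hfx]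
      _ ≤ ‖1 + σ • S‖ := (le_abs_self _).trans
          ((abs_apply_apply_le f _ x).trans_eq (by rw [hf, hx, one_mul, mul_one]))
      _ ≤ M := hσ
  have h₁ := key t hpos
  have h₂ := key (-t) hneg
  have : |f (S x) * t| ≤ M - 1 := abs_le.2 ⟨by linarith, by linarith⟩
  rwa [abs_mul, abs_of_pos ht, ← le_div_iff₀ ht] at this

end NumericalRadius

section Conjugation

variable {𝕜 E F : Type*} [NontriviallyNormedField 𝕜] [SeminormedAddCommGroup E]
  [SeminormedAddCommGroup F] [NormedSpace 𝕜 E] [NormedSpace 𝕜 F]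

lemma norm_conjContinuousAlgEquiv_le (J : E ≃L[𝕜] F) (R : E →L[𝕜] E) :
    ‖J.conjContinuousAlgEquiv R‖ ≤ ‖(J : E →L[𝕜] F)‖ * ‖(J.symm : F →L[𝕜] E)‖ * ‖R‖ :=
  calc ‖J.conjContinuousAlgEquiv R‖ ≤ ‖(J : E →L[𝕜] F)‖ * (‖R‖ * ‖(J.symm : F →L[𝕜] E)‖) :=
        (ContinuousLinearMap.opNorm_comp_le _ _).trans
          (by gcongr; exact ContinuousLinearMap.opNorm_comp_le _ _)
    _ = _ := by ring

end Conjugation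

section Isomorphic

variable {E F : Type*} [NormedAddCommGroup E] [NormedSpace ℝ E] [NormedAddCommGroup F]
  [NormedSpace ℝ F]

lemma nindex_le_of_equiv_of_nradius (J : E ≃L[ℝ] F) {κ t : ℝ}
    (hJ : ‖(J : E →L[ℝ] F)‖ * ‖(J.symm : F →L[ℝ] E)‖ ≤ κ) (ht : 0 < t)
    {T : F →L[ℝ] F} (hT : ‖T‖ = 1) :
    nindex E ≤ (κ - 1) / t + κ ^ 2 * nradius T + 2 * κ ^ 3 * t := by
  have hJ' : ‖(J.symm : F →L[ℝ] E)‖ * ‖(J.symm.symm : E →L[ℝ] F)‖ ≤ κ := by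
    rw [J.symm_symm, mul_comm]; exact hJ
  set S := J.symm.conjContinuousAlgEquiv T
  have hSκ : ‖S‖ ≤ κ :=
    (norm_conjContinuousAlgEquiv_le J.symm T).trans (by rw [hT, mul_one]; exact hJ')
  have hκS : 1 ≤ κ * ‖S‖ :=
    calc 1 = ‖J.conjContinuousAlgEquiv (J.conjContinuousAlgEquiv.symm T)‖ := by
          rw [ContinuousAlgEquiv.apply_symm_apply, hT]
      _ ≤ κ * ‖S‖ := (norm_conjContinuousAlgEquiv_le J S).trans (by gcongr)
  have hS0 : 0 < ‖S‖ := by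
    rcases (norm_nonneg S).eq_or_lt with h | h
    · rw [← h, mul_zero] at hκS; linarith
    · exact h
  have hκ : 1 ≤ κ := by nlinarith
  set w := ‖S‖⁻¹
  have hw0 : 0 < w := inv_pos.2 hS0
  have hwκ : w ≤ κ := by rw [inv_le_iff_one_le_mul₀ hS0]; linarith
  set v := nradius T
  have hv := nradius_nonneg T
  set M := κ * (1 + t * w * v + 2 * (t * w) ^ 2)
  have hM : ∀ σ : ℝ, |σ| = t → ‖1 + σ • w • S‖ ≤ M := fun σ hσ =>
    calc ‖1 + σ • w • S‖ = ‖J.symm.conjContinuousAlgEquiv (1 + (σ * w) • T)‖ := by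
          simp [S, smul_smul]
      _ ≤ κ * ‖1 + (σ * w) • T‖ := (norm_conjContinuousAlgEquiv_le J.symm _).trans (by gcongr)
      _ ≤ κ * (1 + |σ * w| * v + 2 * (σ * w) ^ 2 * ‖T‖ ^ 2) := by
          gcongr; exact norm_one_add_smul_le T _
      _ = M := by rw [hT, abs_mul, hσ, abs_of_pos hw0, mul_pow σ, ← sq_abs σ, hσ]; ring
  calc nindex E ≤ nradius (w • S) := nindex_le_nradius (norm_smul_inv_norm (norm_pos_iff.1 hS0))
    _ ≤ (M - 1) / t := by
        refine nradius_le_of_norm_one_add_smul_le ht (one_le_mul_of_one_le_of_one_le hκ ?_)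
          (hM t (abs_of_pos ht)) (hM (-t) (by rw [abs_neg, abs_of_pos ht]))
        have : 0 ≤ t * w * v := by positivity
        nlinarith
    _ = (κ - 1) / t + κ * w * v + 2 * κ * w ^ 2 * t := by field_simp; ring
    _ ≤ (κ - 1) / t + κ * κ * v + 2 * κ * κ ^ 2 * t := by gcongr
    _ = _ := by ring

lemma nindex_le_of_equiv (J : E ≃L[ℝ] F) {κ t : ℝ}
    (hJ : ‖(J : E →L[ℝ] F)‖ * ‖(J.symm : F →L[ℝ] E)‖ ≤ κ) (hκ : 1 ≤ κ) (ht : 0 < t) :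
    nindex E ≤ (κ - 1) / t + κ ^ 2 * nindex F + 2 * κ ^ 3 * t := by
  have hnF := nindex_nonneg (E := F)
  rcases subsingleton_or_nontrivial F with _ | _
  · have : Subsingleton E := J.toEquiv.subsingleton
    rw [nindex_of_subsingleton]
    have : 0 ≤ (κ - 1) / t := div_nonneg (by linarith) ht.le
    positivity
  · have hκ2 : 0 < κ ^ 2 := by positivity
    have : (nindex E - (κ - 1) / t - 2 * κ ^ 3 * t) / κ ^ 2 ≤ nindex F :=
      le_nindex ContinuousLinearMap.norm_id fun T hT => by
        rw [div_le_iff₀' hκ2]; linarith [nindex_le_of_equiv_of_nradius J hJ ht hT]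
    rw [div_le_iff₀' hκ2] at this
    linarith

end Isomorphic

section OperatorOpening

variable {Y : Type*} [NormedAddCommGroup Y] [NormedSpace ℝ Y]

lemma norm_le_one_add_of_norm_sub_one_le {C : Y →L[ℝ] Y} {η : ℝ} (h : ‖C - 1‖ ≤ η) :
    ‖C‖ ≤ 1 + η :=
  calc ‖C‖ = ‖(C - 1) + 1‖ := by rw [sub_add_cancel]
    _ ≤ η + 1 := norm_add_le_of_le h ContinuousLinearMap.norm_id_le
    _ = 1 + η := add_comm _ _

lemma norm_symm_le_of_norm_sub_one_le {C : Y ≃L[ℝ] Y} {η : ℝ} (h : ‖(C : Y →L[ℝ] Y) - 1‖ ≤ η)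
    (hη : η < 1) : ‖(C.symm : Y →L[ℝ] Y)‖ ≤ (1 - η)⁻¹ := by
  refine ContinuousLinearMap.opNorm_le_bound _ (inv_nonneg.2 (by linarith)) fun w => ?_
  set u := C.symm w
  have hCu : C u = w := C.apply_symm_apply w
  have hCu' : ‖C u - u‖ ≤ η * ‖u‖ := by
    simpa using ((C : Y →L[ℝ] Y) - 1).le_opNorm u |>.trans
      (mul_le_mul_of_nonneg_right h (norm_nonneg u))
  have hu : ‖u‖ ≤ ‖w‖ + η * ‖u‖ := by
    have := norm_le_insert' u (C u)
    rw [norm_sub_rev, hCu] at this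
    rw [hCu] at hCu'
    linarith
  change ‖u‖ ≤ _
  rw [← div_eq_inv_mul, le_div_iff₀' (by linarith)]
  linarith

lemma norm_ofSubmodules_le (C : Y ≃L[ℝ] Y) {A B : Submodule ℝ Y}
    (h : A.map (C : Y →ₗ[ℝ] Y) = B) :
    ‖(C.ofSubmodules A B h : A →L[ℝ] B)‖ ≤ ‖(C : Y →L[ℝ] Y)‖ ∧
      ‖((C.ofSubmodules A B h).symm : B →L[ℝ] A)‖ ≤ ‖(C.symm : Y →L[ℝ] Y)‖ :=
  ⟨ContinuousLinearMap.opNorm_le_bound _ (norm_nonneg _) fun x => (C : Y →L[ℝ] Y).le_opNorm x,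
    ContinuousLinearMap.opNorm_le_bound _ (norm_nonneg _) fun x =>
      (C.symm : Y →L[ℝ] Y).le_opNorm x⟩

lemma exists_equiv_norm_sub_id_lt_of_r0_lt {A B : Submodule ℝ Y} {η : ℝ} (h : r0 A B < η)
    (hη : η ≤ 1) :
    ∃ C : Y ≃L[ℝ] Y, ⇑C '' (A : Set Y) = B ∧ ‖(C : Y →L[ℝ] Y) - 1‖ < η := by
  unfold r0 at h
  split_ifs at h with hex
  · obtain ⟨C, hC⟩ := hex
    obtain ⟨_, ⟨C, hC, rfl⟩, hlt⟩ := exists_lt_of_csInf_lt (by exact ⟨_, C, hC, rfl⟩) h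
    exact ⟨C, hC, hlt⟩
  · linarith

lemma exists_equiv_norm_mul_le_of_r0_lt {A B : Submodule ℝ Y} {η : ℝ} (h : r0 A B < η)
    (hη : η < 1) :
    ∃ J : A ≃L[ℝ] B, ‖(J : A →L[ℝ] B)‖ * ‖(J.symm : B →L[ℝ] A)‖ ≤ (1 + η) / (1 - η) := by
  obtain ⟨C, hC, hCη⟩ := exists_equiv_norm_sub_id_lt_of_r0_lt h hη.le
  have hmap : A.map (C : Y →ₗ[ℝ] Y) = B :=
    SetLike.coe_injective (by rw [Submodule.map_coe]; exact hC)
  obtain ⟨hJ, hJsymm⟩ := norm_ofSubmodules_le C hmap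
  refine ⟨C.ofSubmodules A B hmap, ?_⟩
  calc _ ≤ ‖(C : Y →L[ℝ] Y)‖ * ‖(C.symm : Y →L[ℝ] Y)‖ := by gcongr
    _ ≤ (1 + η) * (1 - η)⁻¹ :=
        mul_le_mul (norm_le_one_add_of_norm_sub_one_le hCη.le)
          (norm_symm_le_of_norm_sub_one_le hCη.le hη) (norm_nonneg _)
          (by linarith [norm_nonneg ((C : Y →L[ℝ] Y) - 1)])
    _ = _ := (div_eq_mul_inv _ _).symm

lemma eventually_exists_equiv_norm_mul_le {ι : Type*} {l : Filter ι} {A : ι → Submodule ℝ Y}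
    {B : Submodule ℝ Y} (h : Tendsto (fun i => rop (A i) B) l (𝓝 0)) {κ : ℝ} (hκ : 1 < κ) :
    ∀ᶠ i in l, ∃ J : A i ≃L[ℝ] B, ‖(J : A i →L[ℝ] B)‖ * ‖(J.symm : B →L[ℝ] A i)‖ ≤ κ := by
  -- `η` solves `(1 + η) / (1 - η) = κ`
  have hη0 : 0 < (κ - 1) / (κ + 1) := div_pos (by linarith) (by linarith)
  have hη1 : (κ - 1) / (κ + 1) < 1 := (div_lt_one (by linarith)).2 (by linarith)
  filter_upwards [h.eventually (gt_mem_nhds hη0)] with i hi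
  obtain ⟨J, hJ⟩ := exists_equiv_norm_mul_le_of_r0_lt ((le_max_left _ _).trans_lt hi) hη1
  refine ⟨J, hJ.trans_eq ?_⟩
  field_simp
  ring

end OperatorOpening

theorem operator_opening_nindex_limsup_general
    (Y : Type*) [NormedAddCommGroup Y] [NormedSpace ℝ Y]
    (Xs : ℕ → Subspace ℝ Y)
    (X : Subspace ℝ Y)
    (hconv : Tendsto (fun n => rop (Xs n) X) atTop (nhds 0)) :
    atTop.limsup (fun n => nindex ↑(Xs n)) ≤ nindex ↑X := by
  have hbound : ∀ t > 0, atTop.limsup (fun n => nindex ↑(Xs n)) ≤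
      t + (1 + t ^ 2) ^ 2 * nindex X + 2 * (1 + t ^ 2) ^ 3 * t := by
    intro t ht
    refine limsup_le_of_le (isCoboundedUnder_le_of_le atTop fun n => nindex_nonneg) ?_
    have hκ : 1 < 1 + t ^ 2 := lt_add_of_pos_right 1 (pow_pos ht 2)
    filter_upwards [eventually_exists_equiv_norm_mul_le hconv hκ] with n ⟨J, hJ⟩
    exact (nindex_le_of_equiv J hJ hκ.le ht).trans_eq
      (by rw [add_sub_cancel_left, sq, mul_self_div_self])
  have hlim : Tendsto (fun t => t + (1 + t ^ 2) ^ 2 * nindex X + 2 * (1 + t ^ 2) ^ 3 * t)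
      (𝓝[>] 0) (𝓝 (nindex X)) := by
    simpa using ((by fun_prop : Continuous fun t : ℝ =>
      t + (1 + t ^ 2) ^ 2 * nindex X + 2 * (1 + t ^ 2) ^ 3 * t).tendsto 0).mono_left
      nhdsWithin_le_nhds
  exact ge_of_tendsto hlim (eventually_nhdsWithin_of_forall hbound)

theorem operator_opening_nindex_limsup
    (Y : Type*) [NormedAddCommGroup Y] [NormedSpace ℝ Y] [CompleteSpace Y]
    (Xs : ℕ → Subspace ℝ Y) (hXs : ∀ n, IsClosed ((Xs n : Set Y)))
    (X : Subspace ℝ Y) (hX : IsClosed (X : Set Y))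
    (hconv : Tendsto (fun n => rop (Xs n) X) atTop (nhds 0)) :
    atTop.limsup (fun n => nindex ↑(Xs n)) ≤ nindex ↑X :=
  operator_opening_nindex_limsup_general Y Xs X hconv
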